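/- For every labeled plane tree T and every pair of distinct edges e_1, e_2 of T, the involutions φ commute: φ_{e_2}(φ_{e_1}(T)) = φ_{e_1}(φ_{e_2}(T)), where in each composite the second map is applied to the image of the corresponding edge in the intermediate tree. -/

import Mathlib

/-- A plane tree with labeled vertices: a root label together with an ordered
list of child subtrees.  (A plane tree is a rooted tree in which the children
of each node are linearly ordered.) -/
inductive LTree : Type where
  | node : ℕ → List LTree → LTree

namespace LTree

/-- The label of the root. -/
def rootLabel : LTree → ℕ
  | node a _ => a

/-- The list of child subtrees of the root. -/
def children : LTree → List LTree
  | node _ cs => cs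

/-- `deg_T(root)`: the number of children of the root. -/
def rootDeg (t : LTree) : ℕ := (children t).length

mutual
  /-- The list of all vertex labels of a tree. -/
  def labels : LTree → List ℕ
    | node a cs => a :: labelsList cs
  /-- The list of all vertex labels of a forest. -/
  def labelsList : List LTree → List ℕ
    | [] => []
    | c :: rest => labels c ++ labelsList rest
end

/-- `β(v)`: the smallest label occurring in the subtree `t` rooted at `v`. -/
def minLabel (t : LTree) : ℕ := (labels t).foldr min (rootLabel t)

/-- `min { j, β(c₁), …, β(cₖ) }` for a vertex `j` and a list of subtrees `c₁, …, cₖ`. -/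
def minOver (j : ℕ) (rest : List LTree) : ℕ := (rest.map minLabel).foldr min j

mutual
  /-- The list of edges of a tree, each recorded as a (parent label, child label)
  pair, in depth-first order. -/
  def edgeList : LTree → List (ℕ × ℕ)
    | node a cs => edgeListAux a cs
  def edgeListAux : ℕ → List LTree → List (ℕ × ℕ)
    | _, [] => []
    | a, c :: rest => (a, rootLabel c) :: (edgeList c ++ edgeListAux a rest)
end

mutual
  /-- The list of improper edges of a tree: if a vertex `j` has children
  `j₁, …, jₖ` (ordered left to right), the edge `(j, jᵢ)` is improper when
  `β(jᵢ) < min { j, β(j_{i+1}), …, β(jₖ) }`. -/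
  def improperEdges : LTree → List (ℕ × ℕ)
    | node a cs => improperEdgesAux a cs
  def improperEdgesAux : ℕ → List LTree → List (ℕ × ℕ)
    | _, [] => []
    | j, c :: rest =>
        (if minLabel c < minOver j rest then [(j, rootLabel c)] else [])
          ++ improperEdges c ++ improperEdgesAux j rest
end

mutual
  /-- The list of proper (i.e. non-improper) edges of a tree. -/
  def properEdges : LTree → List (ℕ × ℕ)
    | node a cs => properEdgesAux a cs
  def properEdgesAux : ℕ → List LTree → List (ℕ × ℕ)
    | _, [] => []
    | j, c :: rest =>
        (if minLabel c < minOver j rest then [] else [(j, rootLabel c)])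
          ++ properEdges c ++ properEdgesAux j rest
end

/-- `impr T`: the number of improper edges of `T`. -/
def impr (t : LTree) : ℕ := (improperEdges t).length

/-- `prop T`: the number of proper edges of `T`. -/
def propCount (t : LTree) : ℕ := (properEdges t).length

/-- The number of edges of `T`. -/
def edgeCount (t : LTree) : ℕ := (edgeList t).length

/-- `T` is a labeled plane tree with `n` edges: its `n + 1` vertices are labeled
bijectively with `{1, 2, …, n + 1}`. -/
def IsLPT (n : ℕ) (t : LTree) : Prop := (labels t).Perm (List.range' 1 (n + 1))

/-- `T` is increasing: vertex labels increase along every path from the root. -/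
inductive Increasing : LTree → Prop where
  | node (a : ℕ) (cs : List LTree) :
      (∀ c ∈ cs, a < rootLabel c) → (∀ c ∈ cs, Increasing c) → Increasing (node a cs)

/-- Search a list of subtrees for one whose root is labeled `j`; if found, return
the triple (subtrees to its left `A(e)`, children of the subtree rooted at `j`
i.e. `B(e)`, subtrees to its right `C(e)`). -/
def findSplit (j : ℕ) : List LTree → Option (List LTree × List LTree × List LTree)
  | [] => none
  | c :: rest =>
      if rootLabel c = j then some ([], children c, rest)
      else
        match findSplit j rest with
        | some (pre, ls, post) => some (c :: pre, ls, post)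
        | none => none

mutual
  /-- The map `φ_e` associated to the edge `e = (i, j)` of a labeled plane tree,
  where `e` is specified by the label `j` of its child endpoint (labels are
  distinct, so this determines the edge).  If the vertex `i` has children
  `k₁, …, k_{t-1}, j, k_{t+1}, …, k_p` and `j` has children `l₁, …, l_q`, then
  `{i, C(e)}` and `{j, B(e)}` are swapped: `j` takes the former position of `i`
  and has children `k₁, …, k_{t-1}, i, l₁, …, l_q`, while `i` has children
  `k_{t+1}, …, k_p`. -/
  def phi (j : ℕ) : LTree → LTree
    | node a cs =>
        match findSplit j cs with
        | some (pre, ls, post) => node j (pre ++ node a post :: ls)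
        | none => node a (phiList j cs)
  def phiList (j : ℕ) : List LTree → List LTree
    | [] => []
    | c :: rest => phi j c :: phiList j rest
end

end LTree

/-!
Induct on the tree and locate both edges among the branches hanging from the root `a`.
The map `φ` at an edge only touches the child list of the edge's parent, and a prefix of
siblings not containing the edge is carried along unchanged (`phi_node_append`). Hence if the
two edges lie in different branches the two maps act on disjoint parts of the tree and commute,
and if both lie strictly inside one branch we descend by induction. The remaining case is
`e₁ = (a, j₁)` with `e₂` inside the subtree of `j₁`: both composites put the root `s₀` of
`s = φ_{e₂}(subtree at j₁)` on top, with children the left siblings of `j₁`, then `a` with the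
right siblings of `j₁`, then the children of `s`; and `s₀ = swap i₂ j₂ j₁`.
-/

lemma Equiv.swap_apply_of_ne_right {α : Type*} [DecidableEq α] {a b x : α} (h : x ≠ b) :
    Equiv.swap a b x = if x = a then b else x := by
  simp [Equiv.swap_apply_def, h]

lemma List.append_cons_eq_append_cons_cases {α : Type*} {p₁ q₁ p₂ q₂ : List α} {x y : α}
    (h : p₁ ++ x :: q₁ = p₂ ++ y :: q₂) :
    (p₁ = p₂ ∧ x = y ∧ q₁ = q₂) ∨ (∃ m, p₂ = p₁ ++ x :: m ∧ q₁ = m ++ y :: q₂) ∨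
      (∃ m, p₁ = p₂ ++ y :: m ∧ q₂ = m ++ x :: q₁) := by
  rcases List.append_eq_append_iff.1 h with ⟨m, rfl, hm⟩ | ⟨m, rfl, hm⟩
  · rcases List.cons_eq_append_iff.1 hm with ⟨rfl, hm⟩ | ⟨m, rfl, rfl⟩
    · obtain ⟨rfl, rfl⟩ := List.cons_eq_cons.1 hm
      simp
    · exact .inr (.inl ⟨m, rfl, rfl⟩)
  · rcases List.cons_eq_append_iff.1 hm with ⟨rfl, hm⟩ | ⟨m, rfl, rfl⟩
    · obtain ⟨rfl, rfl⟩ := List.cons_eq_cons.1 hm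
      simp
    · exact .inr (.inr ⟨m, rfl, rfl⟩)

namespace LTree

@[simp] lemma rootLabel_node (a : ℕ) (cs : List LTree) : rootLabel (node a cs) = a := rfl
@[simp] lemma children_node (a : ℕ) (cs : List LTree) : children (node a cs) = cs := rfl
@[simp] lemma node_rootLabel_children (t : LTree) : node (rootLabel t) (children t) = t := by
  cases t; rfl

@[simp] lemma labels_node (a : ℕ) (cs : List LTree) : labels (node a cs) = a :: labelsList cs := by
  rw [labels]
@[simp] lemma labelsList_nil : labelsList [] = [] := by rw [labelsList]
@[simp] lemma labelsList_cons (c : LTree) (cs : List LTree) :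
    labelsList (c :: cs) = labels c ++ labelsList cs := by rw [labelsList]
@[simp] lemma labelsList_append (cs ds : List LTree) :
    labelsList (cs ++ ds) = labelsList cs ++ labelsList ds := by
  induction cs with
  | nil => simp
  | cons c cs ih => simp [ih]

lemma mem_labelsList {x : ℕ} {cs : List LTree} : x ∈ labelsList cs ↔ ∃ c ∈ cs, x ∈ labels c := by
  induction cs with
  | nil => simp
  | cons c cs ih => simp [ih]

lemma labels_eq_rootLabel_cons (t : LTree) : labels t = rootLabel t :: labelsList (children t) := by
  cases t; simp

lemma rootLabel_mem_labels (t : LTree) : rootLabel t ∈ labels t := by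
  cases t; simp

lemma mem_labels_of_mem_children {x : ℕ} {t : LTree}
    (h : x ∈ labelsList (children t)) : x ∈ labels t :=
  labels_eq_rootLabel_cons t ▸ List.mem_cons_of_mem _ h

theorem induction_on_children {motive : LTree → Prop}
    (node : ∀ a cs, (∀ c ∈ cs, motive c) → motive (node a cs)) (t : LTree) : motive t :=
  match t with
  | .node a cs => node a cs fun c _ => induction_on_children node c
termination_by t
decreasing_by
  have := List.sizeOf_lt_of_mem ‹c ∈ cs›
  simp only [LTree.node.sizeOf_spec]; omega

@[simp] lemma edgeList_node (a : ℕ) (cs : List LTree) :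
    edgeList (node a cs) = edgeListAux a cs := by
  rw [edgeList]
@[simp] lemma edgeListAux_nil (a : ℕ) : edgeListAux a [] = [] := by rw [edgeListAux]
@[simp] lemma edgeListAux_cons (a : ℕ) (c : LTree) (cs : List LTree) :
    edgeListAux a (c :: cs) = (a, rootLabel c) :: (edgeList c ++ edgeListAux a cs) := by
  rw [edgeListAux]

lemma map_snd_edgeList (t : LTree) : (edgeList t).map Prod.snd = labelsList (children t) := by
  induction t using induction_on_children with
  | node a cs ih =>
    simp only [edgeList_node, children_node]
    induction cs with
    | nil => simp
    | cons c cs ihcs =>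
      rw [edgeListAux_cons, List.map_cons, List.map_append, ih c (by simp),
        ihcs fun d hd => ih d (by simp [hd]), labelsList_cons, labels_eq_rootLabel_cons]
      rfl

lemma eq_of_mem_edgeList {t : LTree} (ht : (labels t).Nodup) {i i' j : ℕ}
    (h : (i, j) ∈ edgeList t) (h' : (i', j) ∈ edgeList t) : i = i' := by
  have hnd : ((edgeList t).map Prod.snd).Nodup := by
    rw [map_snd_edgeList]
    cases t
    exact (List.nodup_cons.1 ht).2
  exact congrArg Prod.fst (List.inj_on_of_nodup_map hnd h h' rfl)

lemma snd_mem_labelsList_children {t : LTree} {i j : ℕ} (h : (i, j) ∈ edgeList t) :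
    j ∈ labelsList (children t) :=
  map_snd_edgeList t ▸ List.mem_map_of_mem (f := Prod.snd) h

def InBranch (a : ℕ) (c : LTree) (i j : ℕ) : Prop :=
  (i = a ∧ j = rootLabel c) ∨ (i, j) ∈ edgeList c

lemma exists_inBranch_of_mem_edgeListAux {a i j : ℕ} {cs : List LTree}
    (h : (i, j) ∈ edgeListAux a cs) : ∃ p c q, cs = p ++ c :: q ∧ InBranch a c i j := by
  induction cs with
  | nil => simp at h
  | cons c cs ih =>
    simp only [edgeListAux_cons, List.mem_cons, Prod.mk.injEq, List.mem_append] at h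
    rcases h with h | h | h
    · exact ⟨[], c, cs, rfl, .inl h⟩
    · exact ⟨[], c, cs, rfl, .inr h⟩
    · obtain ⟨p, d, q, rfl, hd⟩ := ih h
      exact ⟨c :: p, d, q, rfl, hd⟩

lemma fst_mem_labels {t : LTree} {i j : ℕ} (h : (i, j) ∈ edgeList t) : i ∈ labels t := by
  induction t using induction_on_children with
  | node a cs ih =>
    obtain ⟨p, c, q, rfl, (⟨rfl, -⟩ | hc)⟩ :=
      exists_inBranch_of_mem_edgeListAux (edgeList_node a _ ▸ h)
    · simp
    · exact List.mem_cons_of_mem _ (mem_labelsList.2 ⟨c, by simp, ih c (by simp) hc⟩)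

@[simp] lemma phiList_nil (j : ℕ) : phiList j [] = [] := by rw [phiList]
@[simp] lemma phiList_cons (j : ℕ) (c : LTree) (cs : List LTree) :
    phiList j (c :: cs) = phi j c :: phiList j cs := by rw [phiList]

lemma phiList_eq_map (j : ℕ) (cs : List LTree) : phiList j cs = cs.map (phi j) := by
  induction cs with
  | nil => simp
  | cons c cs ih => simp [ih]

lemma phi_node_of_findSplit_eq_none {j a : ℕ} {cs : List LTree} (h : findSplit j cs = none) :
    phi j (node a cs) = node a (cs.map (phi j)) := by
  rw [phi, h, phiList_eq_map]

lemma phi_node_of_findSplit_eq_some {j a : ℕ} {cs p ls q : List LTree}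
    (h : findSplit j cs = some (p, ls, q)) : phi j (node a cs) = node j (p ++ node a q :: ls) := by
  rw [phi, h]

lemma findSplit_eq_none {j : ℕ} {cs : List LTree} (h : ∀ c ∈ cs, rootLabel c ≠ j) :
    findSplit j cs = none := by
  induction cs with
  | nil => rfl
  | cons c cs ih =>
    rw [findSplit, if_neg (h c (by simp)), ih fun d hd => h d (by simp [hd])]

lemma findSplit_append {j : ℕ} {p : List LTree} (hp : j ∉ labelsList p) (r : List LTree) :
    findSplit j (p ++ r) = (findSplit j r).map fun s => (p ++ s.1, s.2) := by
  induction p with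
  | nil => simp
  | cons c p ih =>
    simp only [labelsList_cons, List.mem_append, not_or] at hp
    have hc : rootLabel c ≠ j := fun h => hp.1 (h ▸ rootLabel_mem_labels c)
    rw [List.cons_append, findSplit, if_neg hc, ih hp.2]
    cases findSplit j r <;> rfl

lemma phi_eq_self {j : ℕ} {t : LTree} (h : j ∉ labels t) : phi j t = t := by
  induction t using induction_on_children with
  | node a cs ih =>
    have hcs : ∀ c ∈ cs, j ∉ labels c := fun c hc hj =>
      h (List.mem_cons_of_mem _ (mem_labelsList.2 ⟨c, hc, hj⟩))
    rw [phi_node_of_findSplit_eq_none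
      (findSplit_eq_none fun c hc hj => hcs c hc (hj ▸ rootLabel_mem_labels c :))]
    simpa using List.map_congr_left fun c hc => ih c hc (hcs c hc)

lemma map_phi_eq_self {j : ℕ} {cs : List LTree} (h : j ∉ labelsList cs) : cs.map (phi j) = cs :=
  (List.map_congr_left fun c hc => phi_eq_self fun hj => h (mem_labelsList.2 ⟨c, hc, hj⟩)).trans
    (List.map_id cs)

lemma eq_of_findSplit_eq_some {j : ℕ} {cs p ls q : List LTree}
    (h : findSplit j cs = some (p, ls, q)) : cs = p ++ node j ls :: q := by
  induction cs generalizing p with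
  | nil => simp [findSplit] at h
  | cons c cs ih =>
    rw [findSplit] at h
    split_ifs at h with hc
    · obtain ⟨rfl, rfl, rfl⟩ : [] = p ∧ children c = ls ∧ cs = q := by simpa using h
      rw [← hc, node_rootLabel_children]; rfl
    · split at h <;> simp only [Option.some.injEq, Prod.mk.injEq, reduceCtorEq] at h
      obtain ⟨rfl, rfl, rfl⟩ := h
      rw [ih ‹_›]; rfl

lemma phi_node_append {j a : ℕ} {p : List LTree} (hp : j ∉ labelsList p) (r : List LTree) :
    phi j (node a (p ++ r)) =
      node (rootLabel (phi j (node a r))) (p ++ children (phi j (node a r))) := by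
  cases h : findSplit j r with
  | none =>
    have h' : findSplit j (p ++ r) = none := by rw [findSplit_append hp, h]; rfl
    simp [phi_node_of_findSplit_eq_none h, phi_node_of_findSplit_eq_none h', map_phi_eq_self hp]
  | some s =>
    obtain ⟨pre, ls, q⟩ := s
    have h' : findSplit j (p ++ r) = some (p ++ pre, ls, q) := by rw [findSplit_append hp, h]; rfl
    simp [phi_node_of_findSplit_eq_some h, phi_node_of_findSplit_eq_some h']

lemma phi_node_append_node {j a : ℕ} {p : List LTree} (hp : j ∉ labelsList p) (ls q : List LTree) :
    phi j (node a (p ++ node j ls :: q)) = node j (p ++ node a q :: ls) := by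
  rw [phi_node_append hp,
    phi_node_of_findSplit_eq_some (p := []) (ls := ls) (q := q) (by simp [findSplit])]
  simp

lemma phi_node_append_cons {j a : ℕ} {p q : List LTree} {c : LTree} (hp : j ∉ labelsList p)
    (hc : rootLabel c ≠ j) (hq : j ∉ labelsList q) :
    phi j (node a (p ++ c :: q)) = node a (p ++ phi j c :: q) := by
  have hnone : findSplit j (c :: q) = none := findSplit_eq_none <| by
    simp only [List.mem_cons, forall_eq_or_imp]
    exact ⟨hc, fun d hd hj => hq (mem_labelsList.2 ⟨d, hd, hj ▸ rootLabel_mem_labels d⟩)⟩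
  rw [phi_node_append hp, phi_node_of_findSplit_eq_none hnone]
  simp [map_phi_eq_self hq]

lemma phi_node_append_cons_of_not_mem {j a : ℕ} {p : List LTree} {c : LTree}
    (hp : j ∉ labelsList p) (hc : j ∉ labels c) (r : List LTree) :
    phi j (node a (p ++ c :: r)) =
      node (rootLabel (phi j (node a r))) (p ++ c :: children (phi j (node a r))) := by
  simpa using phi_node_append (p := p ++ [c]) (by simp [hp, hc]) r

lemma labelsList_map_perm {f : LTree → LTree} {cs : List LTree}
    (h : ∀ c ∈ cs, (labels (f c)).Perm (labels c)) :
    (labelsList (cs.map f)).Perm (labelsList cs) := by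
  induction cs with
  | nil => simp
  | cons c cs ih =>
    simpa using (h c (by simp)).append (ih fun d hd => h d (by simp [hd]))

lemma labels_phi_perm (j : ℕ) (t : LTree) : (labels (phi j t)).Perm (labels t) := by
  induction t using induction_on_children with
  | node a cs ih =>
    cases h : findSplit j cs with
    | none =>
      rw [phi_node_of_findSplit_eq_none h, labels_node, labels_node]
      exact .cons a (labelsList_map_perm ih)
    | some s =>
      obtain ⟨p, ls, q⟩ := s
      rw [phi_node_of_findSplit_eq_some h, eq_of_findSplit_eq_some h]
      simp only [labels_node, labelsList_append, labelsList_cons]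
      grind

lemma not_mem_labels_phi {j x : ℕ} {t : LTree} (h : x ∉ labels t) : x ∉ labels (phi j t) :=
  fun hx => h ((labels_phi_perm j t).subset hx)

section Nodup

variable {a x : ℕ} {p q : List LTree} {c : LTree}

lemma nodup_labels_of_branch (h : (labels (node a (p ++ c :: q))).Nodup) : (labels c).Nodup :=
  h.sublist <| by
    simpa using .cons a (List.sublist_append_of_sublist_right (List.sublist_append_left _ _))

lemma not_mem_of_mem_labels_branch (h : (labels (node a (p ++ c :: q))).Nodup)
    (hx : x ∈ labels c) : x ≠ a ∧ x ∉ labelsList p ∧ x ∉ labelsList q := by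
  simp only [labels_node, labelsList_append, labelsList_cons, List.nodup_cons,
    List.nodup_append, List.mem_append] at h
  grind

lemma not_mem_of_mem_labelsList_right (h : (labels (node a (p ++ c :: q))).Nodup)
    (hx : x ∈ labelsList q) : x ≠ a ∧ x ∉ labelsList p ∧ x ∉ labels c := by
  simp only [labels_node, labelsList_append, labelsList_cons, List.nodup_cons,
    List.nodup_append, List.mem_append] at h
  grind

lemma ne_rootLabel_of_mem_labelsList_children (h : (labels c).Nodup)
    (hx : x ∈ labelsList (children c)) : x ≠ rootLabel c := by
  rintro rfl
  rw [labels_eq_rootLabel_cons] at h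
  exact (List.nodup_cons.1 h).1 hx

end Nodup

lemma rootLabel_phi_of_mem_edgeList {c : LTree} (hc : (labels c).Nodup) {i j : ℕ}
    (h : (i, j) ∈ edgeList c) :
    rootLabel (phi j c) = if i = rootLabel c then j else rootLabel c := by
  obtain ⟨r, rs⟩ := c
  obtain ⟨p, d, q, rfl, (⟨rfl, rfl⟩ | hd)⟩ :=
    exists_inBranch_of_mem_edgeListAux (edgeList_node r rs ▸ h)
  · obtain ⟨j, ls⟩ := d
    rw [rootLabel_node, phi_node_append_node (not_mem_of_mem_labels_branch hc (by simp)).2.1]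
    simp
  · have hj := snd_mem_labelsList_children hd
    have hnd := nodup_labels_of_branch hc
    obtain ⟨-, hp, hq⟩ := not_mem_of_mem_labels_branch hc (mem_labels_of_mem_children hj)
    have hi : i ≠ r := (not_mem_of_mem_labels_branch hc (fst_mem_labels hd)).1
    rw [phi_node_append_cons hp (ne_rootLabel_of_mem_labelsList_children hnd hj).symm hq]
    simp [hi]

section Commute

variable {a j₁ j₂ : ℕ} {p r : List LTree}

lemma phi_comm_node_append_node {ls : List LTree}
    (hT : (labels (node a (p ++ node j₁ ls :: r))).Nodup) (hj₂ : j₂ ∈ labelsList r) :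
    phi j₂ (phi j₁ (node a (p ++ node j₁ ls :: r)))
      = phi j₁ (phi j₂ (node a (p ++ node j₁ ls :: r))) := by
  obtain ⟨h₂a, h₂p, h₂c⟩ := not_mem_of_mem_labelsList_right hT hj₂
  have h₁p : j₁ ∉ labelsList p := (not_mem_of_mem_labels_branch hT (by simp)).2.1
  have h₂ls : j₂ ∉ labelsList ls := fun h => h₂c (mem_labels_of_mem_children h)
  rw [phi_node_append_node h₁p, phi_node_append_cons (c := node a r) h₂p (Ne.symm h₂a) h₂ls,
    phi_node_append_cons_of_not_mem h₂p h₂c, phi_node_append_node h₁p, node_rootLabel_children]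

lemma phi_comm_node_append_cons {c : LTree} (hT : (labels (node a (p ++ c :: r))).Nodup)
    (hj₁ : j₁ ∈ labelsList (children c)) (hj₂ : j₂ ∈ labelsList r) :
    phi j₂ (phi j₁ (node a (p ++ c :: r))) = phi j₁ (phi j₂ (node a (p ++ c :: r))) := by
  obtain ⟨-, h₂p, h₂c⟩ := not_mem_of_mem_labelsList_right hT hj₂
  obtain ⟨h₁a, h₁p, h₁r⟩ := not_mem_of_mem_labels_branch hT (mem_labels_of_mem_children hj₁)
  have h₁c := (ne_rootLabel_of_mem_labelsList_children (nodup_labels_of_branch hT) hj₁).symm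
  have h₁s : j₁ ∉ labelsList (children (phi j₂ (node a r))) := fun h =>
    not_mem_labels_phi (t := node a r) (by simp [h₁a, h₁r]) (mem_labels_of_mem_children h)
  rw [phi_node_append_cons h₁p h₁c h₁r,
    phi_node_append_cons_of_not_mem h₂p (not_mem_labels_phi h₂c),
    phi_node_append_cons_of_not_mem h₂p h₂c, phi_node_append_cons h₁p h₁c h₁s]

end Commute

lemma InBranch.snd_mem_labels {a i j : ℕ} {c : LTree} (h : InBranch a c i j) : j ∈ labels c := by
  rcases h with ⟨-, rfl⟩ | h
  · exact rootLabel_mem_labels c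
  · exact mem_labels_of_mem_children (snd_mem_labelsList_children h)

lemma InBranch.fst_eq_or_mem_labels {a i j : ℕ} {c : LTree} (h : InBranch a c i j) :
    i = a ∨ i ∈ labels c :=
  h.imp And.left fst_mem_labels

def PhiCommute (t : LTree) (i₁ j₁ i₂ j₂ : ℕ) : Prop :=
  phi (Equiv.swap i₁ j₁ j₂) (phi j₁ t) = phi (Equiv.swap i₂ j₂ j₁) (phi j₂ t)

lemma PhiCommute.symm {t : LTree} {i₁ j₁ i₂ j₂ : ℕ} (h : PhiCommute t i₁ j₁ i₂ j₂) :
    PhiCommute t i₂ j₂ i₁ j₁ :=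
  Eq.symm h

section PhiCommute

variable {a i₁ j₁ i₂ j₂ : ℕ} {p q : List LTree} {c : LTree}

lemma phiCommute_of_inBranch_of_inBranch {c₁ c₂ : LTree} {m : List LTree}
    (hT : (labels (node a (p ++ c₁ :: (m ++ c₂ :: q)))).Nodup)
    (h₁ : InBranch a c₁ i₁ j₁) (h₂ : InBranch a c₂ i₂ j₂) :
    PhiCommute (node a (p ++ c₁ :: (m ++ c₂ :: q))) i₁ j₁ i₂ j₂ := by
  have hj₂ : j₂ ∈ labelsList (m ++ c₂ :: q) := by simpa using .inr (.inl h₂.snd_mem_labels)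
  obtain ⟨h₂a, -, h₂c⟩ := not_mem_of_mem_labelsList_right hT hj₂
  obtain ⟨h₁a, -, h₁r⟩ := not_mem_of_mem_labels_branch hT h₁.snd_mem_labels
  have h₁c : j₁ ∉ labels c₂ := fun h => h₁r (by simp [h])
  have h₂₁ : j₂ ≠ i₁ := by
    rcases h₁.fst_eq_or_mem_labels with rfl | h
    exacts [h₂a, fun e => h₂c (e ▸ h)]
  have h₁₂ : j₁ ≠ i₂ := by
    rcases h₂.fst_eq_or_mem_labels with rfl | h
    exacts [h₁a, fun e => h₁c (e ▸ h)]
  unfold PhiCommute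
  rw [Equiv.swap_apply_of_ne_of_ne h₂₁ fun h => h₂c (h ▸ h₁.snd_mem_labels),
    Equiv.swap_apply_of_ne_of_ne h₁₂ fun h => h₁c (h ▸ h₂.snd_mem_labels)]
  rcases h₁ with ⟨-, rfl⟩ | h₁
  · obtain ⟨j, ls⟩ := c₁
    exact phi_comm_node_append_node hT hj₂
  · exact phi_comm_node_append_cons hT (snd_mem_labelsList_children h₁) hj₂

lemma phiCommute_rootLabel_of_mem_edgeList (hT : (labels (node a (p ++ c :: q))).Nodup)
    (h₂ : (i₂, j₂) ∈ edgeList c) :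
    PhiCommute (node a (p ++ c :: q)) a (rootLabel c) i₂ j₂ := by
  obtain ⟨j₁, ls⟩ := c
  have hnd := nodup_labels_of_branch hT
  have hj₂ := snd_mem_labelsList_children h₂
  have h₂₁ : j₂ ≠ j₁ := ne_rootLabel_of_mem_labelsList_children hnd hj₂
  obtain ⟨h₂a, h₂p, h₂q⟩ := not_mem_of_mem_labels_branch hT (mem_labels_of_mem_children hj₂)
  have h₁p : j₁ ∉ labelsList p := (not_mem_of_mem_labels_branch hT (by simp)).2.1
  have hs : Equiv.swap i₂ j₂ j₁ = rootLabel (phi j₂ (node j₁ ls)) := by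
    rw [rootLabel_phi_of_mem_edgeList hnd h₂, Equiv.swap_apply_of_ne_right h₂₁.symm]
    rcases eq_or_ne i₂ j₁ with rfl | h <;> simp [*, Ne.symm]
  have hsp : rootLabel (phi j₂ (node j₁ ls)) ∉ labelsList p :=
    (not_mem_of_mem_labels_branch hT ((labels_phi_perm _ _).subset (rootLabel_mem_labels _))).2.1
  unfold PhiCommute
  rw [rootLabel_node, Equiv.swap_apply_of_ne_of_ne h₂a h₂₁, hs, phi_node_append_node h₁p,
    phi_node_append_cons_of_not_mem h₂p (by simp [h₂a, h₂q]),
    phi_node_append_cons (c := node j₁ ls) h₂p (Ne.symm h₂₁) h₂q]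
  generalize phi j₂ (node j₁ ls) = s at hsp ⊢
  obtain ⟨x, ys⟩ := s
  rw [rootLabel_node] at hsp
  rw [rootLabel_node, children_node, phi_node_append_node hsp]

lemma rootLabel_phi_ne_swap (hc : (labels c).Nodup) (h₁ : (i₁, j₁) ∈ edgeList c)
    (h₂ : (i₂, j₂) ∈ edgeList c) (hne : j₁ ≠ j₂) :
    rootLabel (phi j₁ c) ≠ Equiv.swap i₁ j₁ j₂ := by
  have hr₁ := ne_rootLabel_of_mem_labelsList_children hc (snd_mem_labelsList_children h₁)
  have hr₂ := ne_rootLabel_of_mem_labelsList_children hc (snd_mem_labelsList_children h₂)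
  rw [rootLabel_phi_of_mem_edgeList hc h₁, Equiv.swap_apply_of_ne_right hne.symm]
  split_ifs <;> omega

lemma phiCommute_node_of_phiCommute (hT : (labels (node a (p ++ c :: q))).Nodup)
    (h₁ : (i₁, j₁) ∈ edgeList c) (h₂ : (i₂, j₂) ∈ edgeList c) (hne : j₁ ≠ j₂)
    (hc : PhiCommute c i₁ j₁ i₂ j₂) : PhiCommute (node a (p ++ c :: q)) i₁ j₁ i₂ j₂ := by
  have hnd := nodup_labels_of_branch hT
  have hj₁ := snd_mem_labelsList_children h₁
  have hj₂ := snd_mem_labelsList_children h₂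
  have hk₂ : Equiv.swap i₁ j₁ j₂ ∈ labels c := by
    rw [Equiv.swap_apply_of_ne_right hne.symm]
    split_ifs <;> exact mem_labels_of_mem_children ‹_›
  have hk₁ : Equiv.swap i₂ j₂ j₁ ∈ labels c := by
    rw [Equiv.swap_apply_of_ne_right hne]
    split_ifs <;> exact mem_labels_of_mem_children ‹_›
  obtain ⟨-, h₁p, h₁q⟩ := not_mem_of_mem_labels_branch hT (mem_labels_of_mem_children hj₁)
  obtain ⟨-, h₂p, h₂q⟩ := not_mem_of_mem_labels_branch hT (mem_labels_of_mem_children hj₂)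
  obtain ⟨-, hk₂p, hk₂q⟩ := not_mem_of_mem_labels_branch hT hk₂
  obtain ⟨-, hk₁p, hk₁q⟩ := not_mem_of_mem_labels_branch hT hk₁
  unfold PhiCommute
  rw [phi_node_append_cons h₁p (ne_rootLabel_of_mem_labelsList_children hnd hj₁).symm h₁q,
    phi_node_append_cons h₂p (ne_rootLabel_of_mem_labelsList_children hnd hj₂).symm h₂q,
    phi_node_append_cons hk₂p (rootLabel_phi_ne_swap hnd h₁ h₂ hne) hk₂q,
    phi_node_append_cons hk₁p (rootLabel_phi_ne_swap hnd h₂ h₁ hne.symm) hk₁q, hc]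

theorem phiCommute_of_mem_edgeList {t : LTree} (hT : (labels t).Nodup)
    (h₁ : (i₁, j₁) ∈ edgeList t) (h₂ : (i₂, j₂) ∈ edgeList t) (hne : j₁ ≠ j₂) :
    PhiCommute t i₁ j₁ i₂ j₂ := by
  induction t using induction_on_children with
  | node a cs ih =>
    obtain ⟨p₁, c₁, q₁, rfl, hb₁⟩ := exists_inBranch_of_mem_edgeListAux (by simpa using h₁)
    obtain ⟨p₂, c₂, q₂, hcs, hb₂⟩ := exists_inBranch_of_mem_edgeListAux (by simpa using h₂)
    rcases List.append_cons_eq_append_cons_cases hcs with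
      ⟨rfl, rfl, rfl⟩ | ⟨m, rfl, rfl⟩ | ⟨m, rfl, rfl⟩
    · rcases hb₁ with ⟨rfl, rfl⟩ | hb₁ <;> rcases hb₂ with ⟨rfl, rfl⟩ | hb₂
      · exact absurd rfl hne
      · exact phiCommute_rootLabel_of_mem_edgeList hT hb₂
      · exact (phiCommute_rootLabel_of_mem_edgeList hT hb₁).symm
      · exact phiCommute_node_of_phiCommute hT hb₁ hb₂ hne
          (ih c₁ (by simp) (nodup_labels_of_branch hT) hb₁ hb₂)
    · exact phiCommute_of_inBranch_of_inBranch hT hb₁ hb₂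
    · simp only [List.append_assoc, List.cons_append] at hT ⊢
      exact (phiCommute_of_inBranch_of_inBranch hT hb₂ hb₁).symm

end PhiCommute

end LTree

/-- In `φ_{e₁}(T)` the image of `e₂` has child endpoint `Equiv.swap i₁ j₁ j₂`: the edge `e₁`
becomes `(j₁, i₁)`, so the edge whose child endpoint was `i₁` acquires child endpoint `j₁`, and
all other edges keep their child endpoints. -/
theorem phi_commute (T : LTree) (hT : (LTree.labels T).Nodup)
    (i₁ j₁ i₂ j₂ : ℕ)
    (h₁ : (i₁, j₁) ∈ LTree.edgeList T) (h₂ : (i₂, j₂) ∈ LTree.edgeList T)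
    (hne : (i₁, j₁) ≠ (i₂, j₂)) :
    LTree.phi (Equiv.swap i₁ j₁ j₂) (LTree.phi j₁ T)
      = LTree.phi (Equiv.swap i₂ j₂ j₁) (LTree.phi j₂ T) := by
  have hj : j₁ ≠ j₂ := by
    rintro rfl
    exact hne (by rw [LTree.eq_of_mem_edgeList hT h₁ h₂])
  exact LTree.phiCommute_of_mem_edgeList hT h₁ h₂ hj
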